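/- arXiv:0910.3428 — 2 statements merged into one kernel-verified Lean document; each statement's English description precedes it below -/
import Mathlib

section
/- Let m ≤ n and ψ an approximating function. If X is an m×n real matrix with entries in [-1/2,1/2] satisfying |qX|_∞ < ψ(|q|_∞) for infinitely many q ∈ ℤᵐ \ {0}, then every m×m minor of X formed by choosing m columns of X has determinant zero. -/
open MeasureTheory Filter

noncomputable def qnorm {m : ℕ} (q : Fin m → ℤ) : ℝ := ‖(fun i => (q i : ℝ) : Fin m → ℝ)‖

def cube (m n : ℕ) : Set (Fin m → Fin n → ℝ) :=
  {X | ∀ i j, X i j ∈ Set.Icc (-(1/2) : ℝ) (1/2)}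

def W0 (m n : ℕ) (ψ : ℝ → ℝ) : Set (Fin m → Fin n → ℝ) :=
  {X | X ∈ cube m n ∧
    {q : Fin m → ℤ | q ≠ 0 ∧
      ‖(fun j => ∑ i, (q i : ℝ) * X i j : Fin n → ℝ)‖ < ψ (qnorm q)}.Infinite}

noncomputable def Hf {α : Type*} [EMetricSpace α] [MeasurableSpace α] [BorelSpace α]
    (f : ℝ → ℝ) : Measure α :=
  Measure.mkMetric (fun d => ENNReal.ofReal (f d.toReal))

/-
If the minor `M` of `X` on the columns `c` were invertible, then `q = (q M) M⁻¹` would give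
`‖q‖ ≤ K ‖q M‖ ≤ K ‖q X‖ < K ψ(‖q‖)` for the infinitely many good `q`. Along these `q` the
norm `‖q‖` tends to infinity, so `K ψ(‖q‖) < 1` eventually, forcing the integer vector `q` to vanish.
-/

theorem Matrix.exists_norm_le_mul_norm_vecMul {𝕜 ι : Type*} [NontriviallyNormedField 𝕜]
    [CompleteSpace 𝕜] [Fintype ι] [DecidableEq ι] (M : Matrix ι ι 𝕜) (hM : IsUnit M.det) :
    ∃ K, 0 ≤ K ∧ ∀ v : ι → 𝕜, ‖v‖ ≤ K * ‖Matrix.vecMul v M‖ := by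
  let f := LinearMap.toContinuousLinearMap (Matrix.vecMulLinear M⁻¹)
  refine ⟨‖f‖, norm_nonneg f, fun v => ?_⟩
  calc ‖v‖ = ‖f (Matrix.vecMul v M)‖ := by
        simp [f, Matrix.vecMul_vecMul, Matrix.mul_nonsing_inv M hM]
    _ ≤ ‖f‖ * ‖Matrix.vecMul v M‖ := f.le_opNorm _

theorem qnorm_eq_norm {m : ℕ} (q : Fin m → ℤ) : qnorm q = ‖q‖ := by
  simp only [qnorm, Pi.norm_def]
  congr!

theorem eq_zero_of_qnorm_lt_one {m : ℕ} {q : Fin m → ℤ} (hq : qnorm q < 1) : q = 0 := by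
  funext i
  have hqi : ‖q i‖ < 1 := (norm_le_pi_norm q i).trans_lt (qnorm_eq_norm q ▸ hq)
  rw [Int.norm_eq_abs] at hqi
  exact Int.abs_lt_one_iff.mp (by exact_mod_cast hqi)

theorem tendsto_qnorm_cofinite_atTop {m : ℕ} :
    Tendsto (qnorm : (Fin m → ℤ) → ℝ) cofinite atTop := by
  simpa only [funext qnorm_eq_norm, cocompact_eq_cofinite] using
    tendsto_norm_cocompact_atTop (E := Fin m → ℤ)

theorem finite_setOf_norm_lt_of_det_ne_zero {m n : ℕ} {ψ : ℝ → ℝ}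
    (hψ0 : Tendsto ψ atTop (nhds 0)) (X : Fin m → Fin n → ℝ) (c : Fin m → Fin n)
    (hdet : Matrix.det (Matrix.of fun i j => X i (c j)) ≠ 0) :
    {q : Fin m → ℤ | q ≠ 0 ∧
      ‖(fun j => ∑ i, (q i : ℝ) * X i j : Fin n → ℝ)‖ < ψ (qnorm q)}.Finite := by
  obtain ⟨K, hK, hbound⟩ :=
    Matrix.exists_norm_le_mul_norm_vecMul _ (isUnit_iff_ne_zero.mpr hdet)
  have hsmall : ∀ᶠ q : Fin m → ℤ in cofinite, K * ψ (qnorm q) < 1 :=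
    ((hψ0.comp tendsto_qnorm_cofinite_atTop).const_mul K).eventually
      (gt_mem_nhds (by rw [mul_zero]; exact one_pos))
  refine (eventually_cofinite.mp hsmall).subset fun q ⟨hq0, hqX⟩ hψq => hq0 ?_
  apply eq_zero_of_qnorm_lt_one
  calc qnorm q ≤ K * ‖(fun j => ∑ i, (q i : ℝ) * X i j) ∘ c‖ :=
        hbound (fun i => (q i : ℝ))
    _ ≤ K * ψ (qnorm q) := mul_le_mul_of_nonneg_left ((pi_norm_comp_le _ c).trans hqX.le) hK
    _ < 1 := hψq

theorem stmt7_general (m n : ℕ) (ψ : ℝ → ℝ)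
    (hψ0 : Tendsto ψ atTop (nhds 0))
    (X : Fin m → Fin n → ℝ) (hX : X ∈ W0 m n ψ) :
    ∀ c : Fin m → Fin n, Function.Injective c →
      Matrix.det (Matrix.of fun i j => X i (c j)) = 0 := by
  intro c _
  by_contra hdet
  exact hX.2 (finite_setOf_norm_lt_of_det_ne_zero hψ0 X c hdet)

theorem stmt7 (m n : ℕ) (hm : 1 ≤ m) (hmn : m ≤ n) (ψ : ℝ → ℝ)
    (hψ : AntitoneOn ψ (Set.Ioi 0)) (hψpos : ∀ r > 0, 0 < ψ r)
    (hψ0 : Tendsto ψ atTop (nhds 0))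
    (X : Fin m → Fin n → ℝ) (hX : X ∈ W0 m n ψ) :
    ∀ c : Fin m → Fin n, Function.Injective c →
      Matrix.det (Matrix.of fun i j => X i (c j)) = 0 :=
  stmt7_general m n ψ hψ0 X hX
end

section
/- Let E(t) := { X ∈ [-1/2,1/2]^{mn} : there exists q ∈ ℤᵐ \ {0} with |q|_∞ < 2ᵗ/ω(t) and |qX|_∞ < m·(2ᵗ)^{-m/n+1} }, where m > n and ω is increasing with ω(t) → ∞. Then the mn-dimensional Lebesgue measure of E(t) is ≪ ω(t)^{-(m−n)}, and in particular tends to 0 as t → ∞. -/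
/-!
Every `X ∈ E(t)` lies in a slab `{X ∈ cube : |qX|_∞ < δ}` for some integer `q ≠ 0` with
`|q|_∞ ≤ R = 2ᵗ/ω(t)`, where `δ = m·(2ᵗ)^(1 - m/n)`. Choosing a coordinate `i₀` with
`|q_{i₀}| = |q|_∞` and integrating over the other rows of `X` (Fubini), row `i₀` is confined to a
sup-norm ball of radius `δ/|q|_∞`, so the slab has volume at most `(2δ/|q|_∞)ⁿ`. There are
`≪ r^(m-1)` vectors with `|q|_∞ = r`, and since `n < m` the sum over `r ≤ R` is `≪ δⁿ R^(m-n)`.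
The choice of `δ` makes the powers of `2ᵗ` cancel, leaving `≪ ω(t)^(-(m-n))`.
-/

open MeasureTheory Filter

def Eset (m n : ℕ) (ω : ℕ → ℝ) (t : ℕ) : Set (Fin m → Fin n → ℝ) :=
  {X | X ∈ cube m n ∧ ∃ q : Fin m → ℤ, q ≠ 0 ∧ qnorm q < 2 ^ t / ω t ∧
    ‖(fun j => ∑ i, (q i : ℝ) * X i j : Fin n → ℝ)‖ <
      m * ((2 : ℝ) ^ t) ^ (-(m : ℝ) / n + 1)}

open Finset

lemma cube_eq_pi (m n : ℕ) :
    cube m n = Set.univ.pi fun _ => Set.univ.pi fun _ => Set.Icc (-(1/2) : ℝ) (1/2) := by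
  ext X
  simp only [cube, Set.mem_ofPred_eq, Set.mem_univ_pi]

lemma measurableSet_cube (m n : ℕ) : MeasurableSet (cube m n) := by
  rw [cube_eq_pi]
  exact .univ_pi fun _ => .univ_pi fun _ => measurableSet_Icc

lemma volume_cube (m n : ℕ) : volume (cube m n) = 1 := by
  simp only [cube_eq_pi, volume_pi_pi, Real.volume_Icc]
  norm_num

lemma volume_norm_smul_add_lt_le {ι : Type*} [Fintype ι] {a : ℝ} (ha : a ≠ 0) (c : ι → ℝ)
    {δ : ℝ} (hδ : 0 ≤ δ) :
    volume {v : ι → ℝ | ‖a • v + c‖ < δ} ≤ ENNReal.ofReal ((2 * δ / |a|) ^ Fintype.card ι) := by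
  have hsub : {v : ι → ℝ | ‖a • v + c‖ < δ} ⊆ Metric.closedBall (-(a⁻¹ • c)) (δ / |a|) := by
    intro v hv
    rw [Metric.mem_closedBall, dist_eq_norm, le_div_iff₀ (abs_pos.2 ha), mul_comm,
      ← Real.norm_eq_abs, ← norm_smul, smul_sub, smul_neg, smul_inv_smul₀ ha, sub_neg_eq_add]
    exact hv.le
  calc _ ≤ _ := measure_mono hsub
    _ = _ := by rw [Real.volume_pi_closedBall _ (by positivity), mul_div_assoc]

lemma volume_le_mul_of_forall_insertNth {k : ℕ} {α : Type*} [MeasureSpace α]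
    [SigmaFinite (volume : Measure α)] (i₀ : Fin (k + 1)) {S : Set (Fin (k + 1) → α)}
    (hS : MeasurableSet S) {C : Set (Fin k → α)} {b : ENNReal}
    (hSC : ∀ v w, i₀.insertNth v w ∈ S → w ∈ C)
    (hfiber : ∀ w ∈ C, volume {v | i₀.insertNth v w ∈ S} ≤ b) :
    volume S ≤ b * volume C := by
  have he := (volume_preserving_piFinSuccAbove (fun _ => α) i₀).symm
  have hfiber' : ∀ w, volume {v | i₀.insertNth v w ∈ S} ≤ C.indicator (fun _ => b) w := by
    intro w
    by_cases hw : w ∈ C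
    · simpa [hw] using hfiber w hw
    · have : {v | i₀.insertNth v w ∈ S} = ∅ :=
        Set.eq_empty_of_forall_notMem fun v hv => hw (hSC v w hv)
      simp [this]
  calc volume S
        = (volume.prod volume) ((MeasurableEquiv.piFinSuccAbove (fun _ => α) i₀).symm ⁻¹' S) :=
        (he.measure_preimage_equiv S).symm
    _ = ∫⁻ w, volume {v | i₀.insertNth v w ∈ S} :=
        Measure.prod_apply_symm (hS.preimage (MeasurableEquiv.measurable _))
    _ ≤ ∫⁻ w, C.indicator (fun _ => b) w := lintegral_mono hfiber'
    _ ≤ b * volume C := lintegral_indicator_const_le _ _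

lemma volume_cube_inter_norm_sum_smul_lt_le {m n : ℕ} (q : Fin m → ℝ) {i₀ : Fin m}
    (hq : q i₀ ≠ 0) {δ : ℝ} (hδ : 0 ≤ δ) :
    volume {X ∈ cube m n | ‖∑ i, q i • X i‖ < δ} ≤ ENNReal.ofReal ((2 * δ / |q i₀|) ^ n) := by
  cases m with
  | zero => exact i₀.elim0
  | succ k =>
    have hmeas : Measurable fun X : Fin (k + 1) → Fin n → ℝ => ‖∑ i, q i • X i‖ := by fun_prop
    have hS : MeasurableSet {X ∈ cube (k + 1) n | ‖∑ i, q i • X i‖ < δ} :=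
      (measurableSet_cube _ _).inter (measurableSet_lt hmeas measurable_const)
    calc _ ≤ ENNReal.ofReal ((2 * δ / |q i₀|) ^ n) * volume (cube k n) := by
          refine volume_le_mul_of_forall_insertNth i₀ hS (fun v w hX i j => ?_) fun w _ => ?_
          · simpa using hX.1 (i₀.succAbove i) j
          · refine le_trans (measure_mono fun v hv => ?_) (by
              simpa using volume_norm_smul_add_lt_le hq (∑ i, q (i₀.succAbove i) • w i) hδ)
            simpa [Fin.sum_univ_succAbove _ i₀] using hv.2
      _ = ENNReal.ofReal ((2 * δ / |q i₀|) ^ n) := by rw [volume_cube, mul_one]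

def natSupNorm {m : ℕ} (q : Fin m → ℤ) : ℕ := univ.sup fun i => (q i).natAbs

lemma natAbs_le_natSupNorm {m : ℕ} (q : Fin m → ℤ) (i : Fin m) : (q i).natAbs ≤ natSupNorm q :=
  Finset.le_sup (f := fun i => (q i).natAbs) (Finset.mem_univ i)

lemma qnorm_eq_natSupNorm {m : ℕ} (q : Fin m → ℤ) : qnorm q = natSupNorm q := by
  have habs (i : Fin m) : ‖(q i : ℝ)‖ = (q i).natAbs := by
    rw [Real.norm_eq_abs, Nat.cast_natAbs, Int.cast_abs]
  apply le_antisymm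
  · refine (pi_norm_le_iff_of_nonneg (Nat.cast_nonneg _)).2 fun i => ?_
    rw [habs]
    exact_mod_cast natAbs_le_natSupNorm q i
  · have hfloor : natSupNorm q ≤ ⌊qnorm q⌋₊ := Finset.sup_le fun i _ =>
      Nat.le_floor ((habs i).symm.trans_le (norm_le_pi_norm (fun i => (q i : ℝ)) i))
    exact (Nat.cast_le.2 hfloor).trans (Nat.floor_le (norm_nonneg _))

lemma natSupNorm_eq_zero_iff {m : ℕ} {q : Fin m → ℤ} : natSupNorm q = 0 ↔ q = 0 := by
  simp [natSupNorm, funext_iff]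

lemma exists_natAbs_eq_natSupNorm {m : ℕ} {q : Fin m → ℤ} (hq : q ≠ 0) :
    ∃ i, (q i).natAbs = natSupNorm q := by
  obtain ⟨i₁, -⟩ := Function.ne_iff.1 hq
  obtain ⟨i, -, hi⟩ := exists_mem_eq_sup _ ⟨i₁, mem_univ i₁⟩ fun i => (q i).natAbs
  exact ⟨i, hi.symm⟩

lemma card_piFinset_update_const {m : ℕ} {α : Type*} (i₀ : Fin m) (s t : Finset α) :
    #(Fintype.piFinset (Function.update (fun _ => s) i₀ t)) = #t * #s ^ (m - 1) := by
  rw [Fintype.card_piFinset]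
  simp [Function.apply_update (fun _ => card), prod_update_of_mem (mem_univ i₀), card_univ_sdiff]

lemma card_filter_natSupNorm_eq_le {m r : ℕ} (hr : r ≠ 0) (T : Finset (Fin m → ℤ)) :
    #{q ∈ T | natSupNorm q = r} ≤ m * (2 * (2 * r + 1) ^ (m - 1)) := by
  have hsub : {q ∈ T | natSupNorm q = r} ⊆ univ.biUnion fun i₀ =>
      Fintype.piFinset (Function.update (fun _ => Icc (-(r : ℤ)) r) i₀ {(r : ℤ), -(r : ℤ)}) := by
    intro q hq
    obtain ⟨-, rfl⟩ := mem_filter.1 hq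
    obtain ⟨i₀, hi₀⟩ := exists_natAbs_eq_natSupNorm (mt natSupNorm_eq_zero_iff.2 hr)
    simp only [mem_biUnion, mem_univ, true_and, Fintype.mem_piFinset]
    refine ⟨i₀, fun i => ?_⟩
    rcases eq_or_ne i i₀ with rfl | hi
    · rw [Function.update_self, ← hi₀, mem_insert, mem_singleton]
      exact Int.natAbs_eq (q i)
    · simp only [Function.update_of_ne hi, mem_Icc, ← abs_le, Int.abs_eq_natAbs, Nat.cast_le]
      exact natAbs_le_natSupNorm q i
  calc #{q ∈ T | natSupNorm q = r} ≤ _ := card_le_card hsub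
    _ ≤ _ := card_biUnion_le
    _ = m * (2 * (2 * r + 1) ^ (m - 1)) := by
      have h2 : #{(r : ℤ), -(r : ℤ)} = 2 := card_pair (by omega)
      simp only [card_piFinset_update_const, h2, Int.card_Icc, sum_const, card_univ,
        Fintype.card_fin, smul_eq_mul]
      congr 4
      omega

noncomputable def intBox (m N : ℕ) : Finset (Fin m → ℤ) :=
  Fintype.piFinset fun _ => Icc (-(N : ℤ)) N

lemma mem_intBox {m N : ℕ} {q : Fin m → ℤ} : q ∈ intBox m N ↔ natSupNorm q ≤ N := by
  simp only [intBox, Fintype.mem_piFinset, Finset.mem_Icc, natSupNorm, Finset.sup_le_iff,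
    Finset.mem_univ, true_implies, ← abs_le, Int.abs_eq_natAbs, Nat.cast_le]

lemma sum_inv_natSupNorm_pow_le {m n : ℕ} (hnm : n < m) (N : ℕ) :
    ∑ q ∈ (intBox m N).erase 0, ((natSupNorm q : ℝ) ^ n)⁻¹ ≤
      2 * m * 3 ^ (m - 1) * (N : ℝ) ^ (m - n) := by
  have hmaps : ∀ q ∈ (intBox m N).erase 0, natSupNorm q ∈ Icc 1 N := fun q hq => by
    obtain ⟨hq0, hqN⟩ := mem_erase.1 hq
    exact mem_Icc.2 ⟨Nat.one_le_iff_ne_zero.2 (mt natSupNorm_eq_zero_iff.1 hq0), mem_intBox.1 hqN⟩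
  have hshell : ∀ r ∈ Icc 1 N, ∑ q ∈ (intBox m N).erase 0 with natSupNorm q = r,
      ((natSupNorm q : ℝ) ^ n)⁻¹ ≤ 2 * m * 3 ^ (m - 1) * (N : ℝ) ^ (m - 1 - n) := by
    intro r hr
    obtain ⟨hr1, hrN⟩ := mem_Icc.1 hr
    have hr1' : (1 : ℝ) ≤ r := by exact_mod_cast hr1
    have hcard := card_filter_natSupNorm_eq_le (by omega : r ≠ 0) ((intBox m N).erase 0)
    rw [sum_congr rfl fun q hq => by rw [(mem_filter.1 hq).2], sum_const, nsmul_eq_mul]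
    calc (#{q ∈ (intBox m N).erase 0 | natSupNorm q = r} : ℝ) * ((r : ℝ) ^ n)⁻¹
        ≤ m * (2 * (2 * r + 1) ^ (m - 1)) * ((r : ℝ) ^ n)⁻¹ := by gcongr; exact_mod_cast hcard
      _ ≤ m * (2 * (3 * r) ^ (m - 1)) * ((r : ℝ) ^ n)⁻¹ := by gcongr; linarith
      _ = 2 * m * 3 ^ (m - 1) * (r : ℝ) ^ (m - 1 - n) := by
        rw [mul_pow, ← pow_sub_mul_pow (r : ℝ) (by omega : n ≤ m - 1)]
        field_simp
      _ ≤ 2 * m * 3 ^ (m - 1) * (N : ℝ) ^ (m - 1 - n) := by gcongr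
  rw [← sum_fiberwise_of_maps_to hmaps]
  calc _ ≤ ∑ _r ∈ Icc 1 N, 2 * m * 3 ^ (m - 1) * (N : ℝ) ^ (m - 1 - n) := sum_le_sum hshell
    _ = 2 * m * 3 ^ (m - 1) * (N : ℝ) ^ (m - n) := by
      rw [sum_const, Nat.card_Icc, Nat.add_sub_cancel, nsmul_eq_mul,
        show m - n = m - 1 - n + 1 by omega, pow_succ]
      ring

def approxSet (m n : ℕ) (R δ : ℝ) : Set (Fin m → Fin n → ℝ) :=
  {X | X ∈ cube m n ∧ ∃ q : Fin m → ℤ, q ≠ 0 ∧ qnorm q < R ∧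
    ‖(fun j => ∑ i, (q i : ℝ) * X i j : Fin n → ℝ)‖ < δ}

lemma approxSet_eq_empty_of_nonpos {m n : ℕ} {R : ℝ} (hR : R ≤ 0) (δ : ℝ) :
    approxSet m n R δ = ∅ :=
  Set.eq_empty_of_forall_notMem fun _ ⟨_, _, _, hqR, _⟩ =>
    (norm_nonneg _).not_gt (hqR.trans_le hR)

lemma sum_mul_apply_eq_sum_smul {m n : ℕ} (a : Fin m → ℝ) (X : Fin m → Fin n → ℝ) :
    (fun j => ∑ i, a i * X i j) = ∑ i, a i • X i := by
  ext j
  simp [Finset.sum_apply]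

theorem volume_approxSet_le {m n : ℕ} (hnm : n < m) {R δ : ℝ} (hR : 0 ≤ R) (hδ : 0 ≤ δ) :
    volume (approxSet m n R δ) ≤
      ENNReal.ofReal (2 * m * 3 ^ (m - 1) * 2 ^ n * (δ ^ n * R ^ (m - n))) := by
  set N := ⌊R⌋₊
  set slab : (Fin m → ℤ) → Set (Fin m → Fin n → ℝ) := fun q =>
    {X ∈ cube m n | ‖∑ i, (q i : ℝ) • X i‖ < δ}
  have hcover : approxSet m n R δ ⊆ ⋃ q ∈ (intBox m N).erase 0, slab q := by
    rintro X ⟨hX, q, hq0, hqR, hqX⟩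
    refine Set.mem_biUnion (mem_erase.2 ⟨hq0, mem_intBox.2 (Nat.le_floor ?_)⟩) ⟨hX, ?_⟩
    · exact (qnorm_eq_natSupNorm q).symm.trans_le hqR.le
    · rwa [← sum_mul_apply_eq_sum_smul]
  have hslab : ∀ q ∈ (intBox m N).erase 0,
      volume (slab q) ≤ ENNReal.ofReal ((2 * δ) ^ n * ((natSupNorm q : ℝ) ^ n)⁻¹) := by
    intro q hq
    obtain ⟨i₀, hi₀⟩ := exists_natAbs_eq_natSupNorm (mem_erase.1 hq).1
    have hqi₀ : |(q i₀ : ℝ)| = natSupNorm q := by rw [← hi₀, Nat.cast_natAbs, Int.cast_abs]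
    have hne : (q i₀ : ℝ) ≠ 0 := Int.cast_ne_zero.2 <| Int.natAbs_ne_zero.1 <|
      hi₀ ▸ mt natSupNorm_eq_zero_iff.1 (mem_erase.1 hq).1
    calc volume (slab q) ≤ ENNReal.ofReal ((2 * δ / |(q i₀ : ℝ)|) ^ n) :=
          volume_cube_inter_norm_sum_smul_lt_le (fun i => (q i : ℝ)) hne hδ
      _ = _ := by rw [hqi₀, div_pow, div_eq_mul_inv]
  calc volume (approxSet m n R δ) ≤ ∑ q ∈ (intBox m N).erase 0, volume (slab q) :=
        (measure_mono hcover).trans (measure_biUnion_finset_le _ _)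
    _ ≤ ∑ q ∈ (intBox m N).erase 0,
          ENNReal.ofReal ((2 * δ) ^ n * ((natSupNorm q : ℝ) ^ n)⁻¹) := sum_le_sum hslab
    _ = ENNReal.ofReal
          ((2 * δ) ^ n * ∑ q ∈ (intBox m N).erase 0, ((natSupNorm q : ℝ) ^ n)⁻¹) := by
        rw [mul_sum, ENNReal.ofReal_sum_of_nonneg fun q _ => by positivity]
    _ ≤ ENNReal.ofReal ((2 * δ) ^ n * (2 * m * 3 ^ (m - 1) * (N : ℝ) ^ (m - n))) := by
        gcongr
        exact sum_inv_natSupNorm_pow_le hnm N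
    _ ≤ ENNReal.ofReal ((2 * δ) ^ n * (2 * m * 3 ^ (m - 1) * R ^ (m - n))) := by
        gcongr
        exact Nat.floor_le hR
    _ = ENNReal.ofReal (2 * m * 3 ^ (m - 1) * 2 ^ n * (δ ^ n * R ^ (m - n))) := by
        rw [mul_pow]
        ring_nf

lemma mul_rpow_pow_mul_div_pow_eq {m n : ℕ} (hn : n ≠ 0) (hnm : n ≤ m) {P w : ℝ} (hP : 0 < P)
    (hw : 0 < w) :
    (m * P ^ (-(m : ℝ) / n + 1)) ^ n * (P / w) ^ (m - n) = m ^ n * w ^ (-((m : ℝ) - n)) := by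
  have hexp : (-(m : ℝ) / n + 1) * n = -((m : ℝ) - n) := by field_simp; ring
  rw [mul_pow, ← Real.rpow_natCast (P ^ _), ← Real.rpow_mul hP.le, hexp, div_pow,
    ← Real.rpow_natCast P, ← Real.rpow_natCast w, Nat.cast_sub hnm, Real.rpow_neg hP.le,
    Real.rpow_neg hw.le]
  have : 0 < P ^ ((m : ℝ) - n) := by positivity
  field_simp

theorem stmt13_general (m n : ℕ) (hn : 1 ≤ n) (hmn : n < m) (ω : ℕ → ℝ)
    (hωtop : Tendsto ω atTop atTop) :
    (∃ c > (0 : ℝ), ∀ t : ℕ,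
        volume (Eset m n ω t) ≤ ENNReal.ofReal (c * ω t ^ (-((m : ℝ) - n)))) ∧
      Tendsto (fun t : ℕ => volume (Eset m n ω t)) atTop (nhds 0) := by
  have hm : 0 < m := by omega
  set c : ℝ := 2 * m * 3 ^ (m - 1) * 2 ^ n * m ^ n
  have hbound : ∀ t, volume (Eset m n ω t) ≤ ENNReal.ofReal (c * ω t ^ (-((m : ℝ) - n))) := by
    intro t
    change volume (approxSet m n (2 ^ t / ω t) (m * ((2 : ℝ) ^ t) ^ (-(m : ℝ) / n + 1))) ≤ _
    rcases le_or_gt (ω t) 0 with hω | hω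
    · rw [approxSet_eq_empty_of_nonpos (div_nonpos_of_nonneg_of_nonpos (by positivity) hω),
        measure_empty]
      exact zero_le
    · refine (volume_approxSet_le hmn (by positivity) (by positivity)).trans_eq ?_
      rw [mul_rpow_pow_mul_div_pow_eq (by omega) hmn.le (by positivity) hω, ← mul_assoc]
  refine ⟨⟨c, by positivity, hbound⟩, ?_⟩
  have hlim : Tendsto (fun t => ENNReal.ofReal (c * ω t ^ (-((m : ℝ) - n)))) atTop (nhds 0) := by
    have h := ((tendsto_rpow_neg_atTop (sub_pos.2 (Nat.cast_lt.2 hmn))).comp hωtop).const_mul c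
    simpa using ENNReal.tendsto_ofReal h
  exact tendsto_of_tendsto_of_tendsto_of_le_of_le tendsto_const_nhds hlim (fun _ => zero_le)
    hbound

theorem stmt13 (m n : ℕ) (hn : 1 ≤ n) (hmn : n < m) (ω : ℕ → ℝ)
    (hω : Monotone ω) (hωpos : ∀ t, 0 < ω t) (hωtop : Tendsto ω atTop atTop) :
    (∃ c > (0 : ℝ), ∀ t : ℕ,
        volume (Eset m n ω t) ≤ ENNReal.ofReal (c * ω t ^ (-((m : ℝ) - n)))) ∧
      Tendsto (fun t : ℕ => volume (Eset m n ω t)) atTop (nhds 0) :=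
  stmt13_general m n hn hmn ω hωtop
end
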